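/- Let M be a module over R[S₃]. For i = 1, 2, 3 let M_i denote the image of the R-linear map m ↦ e_i·m. Then each M_i is an R[S₃]-submodule of M, and M is the internal direct sum M = M₁ ⊕ M₂ ⊕ M₃. -/

import Mathlib

noncomputable section

/-- A fixed 3-cycle in `S₃ = Equiv.Perm (Fin 3)` (it sends `0 ↦ 1 ↦ 2 ↦ 0`). -/
def σ : Equiv.Perm (Fin 3) := finRotate 3

/-- A fixed transposition in `S₃ = Equiv.Perm (Fin 3)`; it satisfies `τ * σ * τ⁻¹ = σ ^ 2`. -/
def τ : Equiv.Perm (Fin 3) := Equiv.swap 0 1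

/-- The image of a group element in the group ring `R[S₃]`. -/
def G (R : Type*) [CommRing R] (g : Equiv.Perm (Fin 3)) :
    MonoidAlgebra R (Equiv.Perm (Fin 3)) :=
  MonoidAlgebra.of R (Equiv.Perm (Fin 3)) g

/-- `e₁ = (1/6)(e + σ + σ² + τ + στ + σ²τ)` in `R[S₃]`. -/
def e₁ (R : Type*) [CommRing R] [Invertible (6 : R)] :
    MonoidAlgebra R (Equiv.Perm (Fin 3)) :=
  ⅟(6:R) • (1 + G R σ + G R (σ^2) + G R τ + G R (σ*τ) + G R (σ^2*τ))

/-- `e₂ = (1/6)(e + σ + σ² - τ - στ - σ²τ)` in `R[S₃]`. -/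
def e₂ (R : Type*) [CommRing R] [Invertible (6 : R)] :
    MonoidAlgebra R (Equiv.Perm (Fin 3)) :=
  ⅟(6:R) • (1 + G R σ + G R (σ^2) - G R τ - G R (σ*τ) - G R (σ^2*τ))

/-- `e₃ = (1/3)(2e - σ - σ²)` in `R[S₃]`; here `1/3 = 2 * (1/6)`. -/
def e₃ (R : Type*) [CommRing R] [Invertible (6 : R)] :
    MonoidAlgebra R (Equiv.Perm (Fin 3)) :=
  (2 * ⅟(6:R)) • (2 - G R σ - G R (σ^2))

/-- `e₃₁ = (1/3)(e - σ + στ - σ²τ)` in `R[S₃]`. -/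
def e₃₁ (R : Type*) [CommRing R] [Invertible (6 : R)] :
    MonoidAlgebra R (Equiv.Perm (Fin 3)) :=
  (2 * ⅟(6:R)) • (1 - G R σ + G R (σ*τ) - G R (σ^2*τ))

/-- `e₃₂ = (1/3)(e - σ² - στ + σ²τ)` in `R[S₃]`. -/
def e₃₂ (R : Type*) [CommRing R] [Invertible (6 : R)] :
    MonoidAlgebra R (Equiv.Perm (Fin 3)) :=
  (2 * ⅟(6:R)) • (1 - G R (σ^2) - G R (σ*τ) + G R (σ^2*τ))

/-- The image of the `R`-linear map `m ↦ a • m` on an `R[S₃]`-module `M`,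
as an `R`-submodule of `M`. -/
def eRange (R : Type*) [CommRing R] (M : Type*) [AddCommGroup M] [Module R M]
    [Module (MonoidAlgebra R (Equiv.Perm (Fin 3))) M]
    [IsScalarTower R (MonoidAlgebra R (Equiv.Perm (Fin 3))) M]
    (a : MonoidAlgebra R (Equiv.Perm (Fin 3))) : Submodule R M where
  carrier := Set.range fun m : M => a • m
  zero_mem' := ⟨0, smul_zero a⟩
  add_mem' := by
    rintro _ _ ⟨x, rfl⟩ ⟨y, rfl⟩
    exact ⟨x + y, smul_add a x y⟩
  smul_mem' := by
    rintro r _ ⟨x, rfl⟩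
    exact ⟨r • x, smul_comm a r x⟩

/-!
For a linear character `χ : H →* k` of a finite group, `s_χ = ∑ g, χ g⁻¹ • g ∈ k[H]` satisfies
`h * s_χ = χ h • s_χ = s_χ * h`. Hence `s_χ` is central, `s_χ * s_χ = |H| • s_χ`, and
`s_χ * s_ψ = 0` as soon as `χ h - ψ h` is a unit for some `h`. Now `e₁` and `e₂` are `s_χ / 6` for
the trivial and the sign character of `S₃`, which differ by `2` at `τ`, and `e₃ = 1 - e₁ - e₂`.
So `e₁, e₂, e₃` are central complete orthogonal idempotents, and for any such family the images
`eᵢ • M` are stable under the action and decompose `M`: `eᵢ` is the identity on `eᵢ • M` and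
kills every `eⱼ • M` with `j ≠ i`.
-/

namespace MonoidAlgebra

variable {k H : Type*} [CommRing k] [Group H] [Fintype H] (χ : H →* k)

def charSum : MonoidAlgebra k H := ∑ g, χ g⁻¹ • of k H g

theorem of_mul_charSum (h : H) : of k H h * charSum χ = χ h • charSum χ := by
  simp only [charSum, Finset.mul_sum, Finset.smul_sum, mul_smul_comm, ← map_mul, smul_smul]
  refine Fintype.sum_equiv (Equiv.mulLeft h) _ _ fun g => ?_
  simp only [Equiv.coe_mulLeft, mul_inv_rev, map_mul]
  rw [mul_left_comm, ← map_mul χ h, mul_inv_cancel, map_one, mul_one]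

theorem charSum_mul_of (h : H) : charSum χ * of k H h = χ h • charSum χ := by
  simp only [charSum, Finset.sum_mul, Finset.smul_sum, smul_mul_assoc, ← map_mul, smul_smul]
  refine Fintype.sum_equiv (Equiv.mulRight h) _ _ fun g => ?_
  rw [Equiv.coe_mulRight, mul_inv_rev, mul_inv_cancel_left]

theorem commute_charSum (a : MonoidAlgebra k H) : Commute a (charSum χ) := by
  induction a using MonoidAlgebra.induction_on with
  | of g => exact (of_mul_charSum χ g).trans (charSum_mul_of χ g).symm
  | add a b ha hb => exact ha.add_left hb
  | smul r a ha => exact ha.smul_left r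

theorem charSum_mul_self : charSum χ * charSum χ = (Fintype.card H : k) • charSum χ := by
  nth_rw 1 [charSum]
  simp only [Finset.sum_mul, smul_mul_assoc, of_mul_charSum, smul_smul, ← map_mul,
    inv_mul_cancel, map_one, one_smul, Finset.sum_const, Finset.card_univ, Nat.cast_smul_eq_nsmul]

theorem isIdempotentElem_smul_charSum {c : k} (hc : c * Fintype.card H = 1) :
    IsIdempotentElem (c • charSum χ) := by
  rw [IsIdempotentElem, smul_mul_smul_comm, charSum_mul_self, smul_smul, mul_assoc, hc, mul_one]

theorem charSum_mul_charSum_eq_zero {ψ : H →* k} (h : H) (hu : IsUnit (χ h - ψ h)) :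
    charSum χ * charSum ψ = 0 := by
  rw [← hu.smul_eq_zero, sub_smul, ← smul_mul_assoc, ← charSum_mul_of, mul_assoc,
    of_mul_charSum, mul_smul_comm, sub_self]

end MonoidAlgebra

theorem CompleteOrthogonalIdempotents.of_add_add_eq_one {R : Type*} [Ring R] {e f g : R}
    (he : IsIdempotentElem e) (hf : IsIdempotentElem f) (hef : e * f = 0) (hfe : f * e = 0)
    (hsum : e + f + g = 1) : CompleteOrthogonalIdempotents ![e, f, g] := by
  obtain rfl : g = 1 - e - f := by rw [← hsum]; abel
  refine (CompleteOrthogonalIdempotents.iff_ortho_complete).2 ⟨fun i j hij => ?_, ?_⟩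
  · fin_cases i <;> fin_cases j <;>
      simp_all [mul_sub, sub_mul, he.eq, hf.eq]
  · simp [Fin.sum_univ_three]

theorem smul_mem_range_smul_of_commute {A R M : Type*} [Semiring R] [Semiring A]
    [AddCommMonoid M] [Module R M] [Module A M] [SMulCommClass A R M] {a e : A}
    (hc : Commute a e) {x : M} (hx : x ∈ LinearMap.range (DistribSMul.toLinearMap R M e)) :
    a • x ∈ LinearMap.range (DistribSMul.toLinearMap R M e) := by
  obtain ⟨m, rfl⟩ := hx
  exact ⟨a • m, by simp only [DistribSMul.toLinearMap_apply, ← mul_smul, hc.eq]⟩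

theorem DirectSum.isInternal_range_smul {ι A R M : Type*} [Ring R] [Semiring A] [AddCommGroup M]
    [Module R M] [Module A M] [SMulCommClass A R M] [Fintype ι] [DecidableEq ι] {e : ι → A}
    (he : CompleteOrthogonalIdempotents e) :
    DirectSum.IsInternal fun i => LinearMap.range (DistribSMul.toLinearMap R M (e i)) := by
  rw [DirectSum.isInternal_submodule_iff_iSupIndep_and_iSup_eq_top]
  constructor
  · refine iSupIndep_def.2 fun i => Submodule.disjoint_def.2 fun x hx hx' => ?_
    have hker : ⨆ (j) (_ : j ≠ i), LinearMap.range (DistribSMul.toLinearMap R M (e j)) ≤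
        LinearMap.ker (DistribSMul.toLinearMap R M (e i)) :=
      iSup₂_le fun j hj => LinearMap.range_le_ker_iff.2 <| LinearMap.ext fun m => by
        simp [← mul_smul, he.ortho hj.symm]
    obtain ⟨m, rfl⟩ := hx
    rw [← hker hx']
    simp only [DistribSMul.toLinearMap_apply, ← mul_smul, (he.idem i).eq]
  · refine eq_top_iff.2 fun m _ => ?_
    rw [← one_smul A m, ← he.complete, Finset.sum_smul]
    exact Submodule.sum_mem_iSup fun i => ⟨m, rfl⟩

section SignChar

variable (R : Type*) [CommRing R] {α : Type*} [Fintype α] [DecidableEq α]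

def signChar : Equiv.Perm α →* R :=
  (Int.castRingHom R : ℤ →* R).comp ((Units.coeHom ℤ).comp Equiv.Perm.sign)

theorem signChar_inv (g : Equiv.Perm α) : signChar R g⁻¹ = signChar R g := by
  simp [signChar]

end SignChar

section SymmetricGroupThree

open MonoidAlgebra

theorem sum_perm_fin_three {M : Type*} [AddCommMonoid M] (f : Equiv.Perm (Fin 3) → M) :
    ∑ g, f g = f 1 + f σ + f (σ ^ 2) + f τ + f (σ * τ) + f (σ ^ 2 * τ) := by
  rw [show (Finset.univ : Finset (Equiv.Perm (Fin 3))) = {1, σ, σ ^ 2, τ, σ * τ, σ ^ 2 * τ} by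
    decide]
  rw [Finset.sum_insert (by decide), Finset.sum_insert (by decide), Finset.sum_insert (by decide),
    Finset.sum_insert (by decide), Finset.sum_insert (by decide), Finset.sum_singleton]
  simp only [add_assoc]

variable (R : Type*) [CommRing R]

theorem signChar_σ : signChar R σ = 1 := by
  simp [signChar, show Equiv.Perm.sign σ = 1 by decide]

theorem signChar_τ : signChar R τ = -1 := by
  simp [signChar, show Equiv.Perm.sign τ = -1 by decide]

variable [Invertible (6 : R)]

theorem e₁_eq_smul_charSum : e₁ R = ⅟(6 : R) • charSum (1 : Equiv.Perm (Fin 3) →* R) := by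
  simp only [e₁, charSum, sum_perm_fin_three, MonoidHom.one_apply, one_smul, map_one, G]

theorem e₂_eq_smul_charSum : e₂ R = ⅟(6 : R) • charSum (signChar R) := by
  simp only [e₂, charSum, sum_perm_fin_three, signChar_inv, map_one, map_mul, map_pow, signChar_σ,
    signChar_τ, G]
  module

theorem e₁_add_e₂_add_e₃ : e₁ R + e₂ R + e₃ R = 1 := by
  simp only [e₁, e₂, e₃, ← one_add_one_eq_two]
  linear_combination (norm := module)
    invOf_mul_self (6 : R) • (1 : MonoidAlgebra R (Equiv.Perm (Fin 3)))

theorem invOf_six_mul_card_perm_fin_three : ⅟(6 : R) * Fintype.card (Equiv.Perm (Fin 3)) = 1 := by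
  rw [Fintype.card_perm, Fintype.card_fin]
  exact invOf_mul_self' (6 : R)

theorem e₃_eq_one_sub : e₃ R = 1 - e₁ R - e₂ R := by
  rw [← e₁_add_e₂_add_e₃]; abel

theorem completeOrthogonalIdempotents_e : CompleteOrthogonalIdempotents ![e₁ R, e₂ R, e₃ R] := by
  have h₁₂ : IsUnit ((1 : Equiv.Perm (Fin 3) →* R) τ - signChar R τ) := by
    rw [MonoidHom.one_apply, signChar_τ, sub_neg_eq_add, one_add_one_eq_two]
    exact isUnit_of_mul_isUnit_left (y := 3) (by norm_num; exact isUnit_of_invertible (6 : R))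
  have h₂₁ : IsUnit (signChar R τ - (1 : Equiv.Perm (Fin 3) →* R) τ) := by
    rw [← neg_sub]; exact h₁₂.neg
  refine .of_add_add_eq_one ?_ ?_ ?_ ?_ (e₁_add_e₂_add_e₃ R) <;>
    simp only [e₁_eq_smul_charSum, e₂_eq_smul_charSum]
  · exact isIdempotentElem_smul_charSum _ (invOf_six_mul_card_perm_fin_three R)
  · exact isIdempotentElem_smul_charSum _ (invOf_six_mul_card_perm_fin_three R)
  · rw [smul_mul_smul_comm, charSum_mul_charSum_eq_zero _ τ h₁₂, smul_zero]
  · rw [smul_mul_smul_comm, charSum_mul_charSum_eq_zero _ τ h₂₁, smul_zero]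

theorem commute_e (i : Fin 3) (a : MonoidAlgebra R (Equiv.Perm (Fin 3))) :
    Commute a (![e₁ R, e₂ R, e₃ R] i) := by
  have h₁ : Commute a (e₁ R) := e₁_eq_smul_charSum R ▸ (commute_charSum _ a).smul_right _
  have h₂ : Commute a (e₂ R) := e₂_eq_smul_charSum R ▸ (commute_charSum _ a).smul_right _
  fin_cases i
  · exact h₁
  · exact h₂
  · exact e₃_eq_one_sub R ▸ ((Commute.one_right a).sub_right h₁).sub_right h₂

end SymmetricGroupThree

theorem statement13 (R : Type*) [CommRing R] [Invertible (6 : R)]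
    (M : Type*) [AddCommGroup M] [Module R M]
    [Module (MonoidAlgebra R (Equiv.Perm (Fin 3))) M]
    [IsScalarTower R (MonoidAlgebra R (Equiv.Perm (Fin 3))) M] :
    (∀ i : Fin 3, ∀ a : MonoidAlgebra R (Equiv.Perm (Fin 3)), ∀ x : M,
      x ∈ ![eRange R M (e₁ R), eRange R M (e₂ R), eRange R M (e₃ R)] i →
        a • x ∈ ![eRange R M (e₁ R), eRange R M (e₂ R), eRange R M (e₃ R)] i) ∧
    DirectSum.IsInternal ![eRange R M (e₁ R), eRange R M (e₂ R), eRange R M (e₃ R)] := by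
  have hrange : ![eRange R M (e₁ R), eRange R M (e₂ R), eRange R M (e₃ R)] =
      fun i => LinearMap.range (DistribSMul.toLinearMap R M (![e₁ R, e₂ R, e₃ R] i)) := by
    funext i; fin_cases i <;> rfl
  rw [hrange]
  exact ⟨fun i a _ => smul_mem_range_smul_of_commute (commute_e R i a),
    DirectSum.isInternal_range_smul (completeOrthogonalIdempotents_e R)⟩
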